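/- arXiv:1412.8113 — 4 statements merged into one kernel-verified Lean document; each statement's English description precedes it below -/
import Mathlib

section
/- Let K be a real Hilbert space, ξ ∈ K, and F an ℝⁿ-valued Fréchet-C¹ map defined on a neighborhood of ξ with bounded derivative DF, such that DF(ξ): K → ℝⁿ is surjective. Let L be a real Banach space continuously and densely embedded in K. Then there exists a sequence ξ_j ∈ L (j = 1,2,…) with ‖ξ_j − ξ‖_K → 0 and F(ξ_j) = F(ξ) for all j. -/
/-!
Consider `Φ (x, l) = (x, F (x + e l))` on `K × L`. Its strict derivative at `(ξ, 0)` is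
`(h, k) ↦ (h, F' ξ (h + e k))`, which is onto because `F' ξ ∘ e` has dense range in the
finite-dimensional target, hence is onto. By the open mapping theorem for strictly differentiable
maps, `Φ` sends neighbourhoods of `(ξ, 0)` onto neighbourhoods of `(ξ, F ξ)`; so for every `e l₀`
close enough to `ξ` there is an `l` with `e (l₀ + l)` close to `ξ` and `F (e (l₀ + l)) = F ξ`.
-/

open Filter Topology

theorem LinearMap.surjective_of_denseRange {𝕜 E F : Type*} [NontriviallyNormedField 𝕜]
    [CompleteSpace 𝕜] [AddCommGroup E] [Module 𝕜 E] [NormedAddCommGroup F] [NormedSpace 𝕜 F]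
    [FiniteDimensional 𝕜 F] (f : E →ₗ[𝕜] F) (hf : DenseRange f) : Function.Surjective f := by
  rw [← Set.range_eq_univ, ← LinearMap.coe_range,
    ← (LinearMap.range f).closed_of_finiteDimensional.closure_eq, LinearMap.coe_range,
    hf.closure_range]

section

variable {𝕜 K L Y : Type*} [NontriviallyNormedField 𝕜]
  [NormedAddCommGroup K] [NormedSpace 𝕜 K] [CompleteSpace K]
  [NormedAddCommGroup L] [NormedSpace 𝕜 L] [CompleteSpace L]
  [NormedAddCommGroup Y] [NormedSpace 𝕜 Y] [CompleteSpace Y]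
  {F : K → Y} {F' : K →L[𝕜] Y} {ξ : K}

theorem HasStrictFDerivAt.eventually_exists_add_mem_and_eq (hF : HasStrictFDerivAt F F' ξ)
    (e : L →L[𝕜] K) (hsurj : Function.Surjective (F'.comp e)) {W : Set K} (hW : W ∈ 𝓝 ξ) :
    ∀ᶠ x in 𝓝 ξ, ∃ l, x + e l ∈ W ∧ F (x + e l) = F ξ := by
  set S : K × L →L[𝕜] K :=
    ContinuousLinearMap.fst 𝕜 K L + e.comp (ContinuousLinearMap.snd 𝕜 K L)
  have hS : HasStrictFDerivAt (fun p : K × L => F (p.1 + e p.2)) (F'.comp S) (ξ, 0) := by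
    have : HasStrictFDerivAt (fun p : K × L => p.1 + e p.2) S (ξ, 0) := S.hasStrictFDerivAt
    exact (by simpa using hF : HasStrictFDerivAt F F' (ξ + e 0)).comp (ξ, 0) this
  have hΦ := (hasStrictFDerivAt_fst (p := ((ξ, 0) : K × L)) (𝕜 := 𝕜)).prodMk hS
  have hΦsurj : Function.Surjective ((ContinuousLinearMap.fst 𝕜 K L).prod (F'.comp S)) := by
    rintro ⟨x, y⟩
    obtain ⟨l, hl⟩ := hsurj (y - F' x)
    exact ⟨(x, l), by simp_all [S]⟩
  have hN : {p : K × L | p.1 + e p.2 ∈ W} ∈ 𝓝 ((ξ, 0) : K × L) :=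
    (by fun_prop : Continuous fun p : K × L => p.1 + e p.2).continuousAt.preimage_mem_nhds
      (by simpa using hW)
  have himage := image_mem_map (m := fun p : K × L => (p.1, F (p.1 + e p.2))) hN
  rw [hΦ.map_nhds_eq_of_surj (LinearMap.range_eq_top.2 hΦsurj)] at himage
  simp only [map_zero, add_zero] at himage
  filter_upwards [(continuous_id.prodMk continuous_const).continuousAt.preimage_mem_nhds himage]
  rintro x ⟨⟨x', l⟩, hl, hx⟩
  simp only [Prod.mk.injEq] at hx
  obtain ⟨rfl, hFx⟩ := hx
  exact ⟨l, hl, hFx⟩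

theorem HasStrictFDerivAt.mem_closure_image_setOf_eq (hF : HasStrictFDerivAt F F' ξ)
    {e : L →L[𝕜] K} (he : DenseRange e) (hsurj : Function.Surjective (F'.comp e)) :
    ξ ∈ closure (e '' {l | F (e l) = F ξ}) := by
  refine mem_closure_iff_nhds.2 fun W hW => ?_
  obtain ⟨l₀, l, hlW, hlF⟩ := he.mem_nhds (hF.eventually_exists_add_mem_and_eq e hsurj hW)
  rw [← map_add] at hlW hlF
  exact ⟨e (l₀ + l), hlW, l₀ + l, hlF, rfl⟩

end

theorem exists_seq_in_dense_subspace_with_same_value_general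
    {K : Type*} [NormedAddCommGroup K] [InnerProductSpace ℝ K] [CompleteSpace K]
    {L : Type*} [NormedAddCommGroup L] [NormedSpace ℝ L] [CompleteSpace L]
    (e : L →L[ℝ] K) (he : DenseRange e)
    (n : ℕ) (F : K → EuclideanSpace ℝ (Fin n))
    (F' : K → K →L[ℝ] EuclideanSpace ℝ (Fin n))
    (ξ : K) (U : Set K) (hU : IsOpen U) (hξU : ξ ∈ U)
    (hF : ∀ x ∈ U, HasFDerivAt F (F' x) x)
    (hF'cont : ContinuousOn F' U)
    (hsurj : Function.Surjective (F' ξ)) :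
    ∃ ξj : ℕ → L,
      Tendsto (fun j => ‖e (ξj j) - ξ‖) atTop (nhds 0) ∧ ∀ j, F (e (ξj j)) = F ξ := by
  have hU' : U ∈ 𝓝 ξ := hU.mem_nhds hξU
  have hstrict : HasStrictFDerivAt F (F' ξ) ξ :=
    hasStrictFDerivAt_of_hasFDerivAt_of_continuousAt (eventually_of_mem hU' hF)
      (hF'cont.continuousAt hU')
  have hsurj_comp : Function.Surjective ((F' ξ).comp e) :=
    LinearMap.surjective_of_denseRange _ (hsurj.denseRange.comp he (F' ξ).continuous)
  obtain ⟨x, hx, hlim⟩ :=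
    mem_closure_iff_seq_limit.1 (hstrict.mem_closure_image_setOf_eq he hsurj_comp)
  choose ξj hξj using hx
  refine ⟨ξj, ?_, fun j => (hξj j).1⟩
  simpa only [(hξj _).2] using tendsto_iff_norm_sub_tendsto_zero.1 hlim

/-- Lemma 3.2 (lm.inver): let `K` be a real Hilbert space, `ξ ∈ K`, and
`F : K → ℝⁿ` Fréchet-`C¹` on a neighborhood `U` of `ξ` with bounded derivative,
with `DF(ξ)` surjective. If `L` is a real Banach space continuously and densely
embedded in `K` (via `e`), then there is a sequence `ξ_j ∈ L` with
`‖e ξ_j − ξ‖_K → 0` and `F(e ξ_j) = F(ξ)` for all `j`. -/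
theorem exists_seq_in_dense_subspace_with_same_value
    {K : Type*} [NormedAddCommGroup K] [InnerProductSpace ℝ K] [CompleteSpace K]
    {L : Type*} [NormedAddCommGroup L] [NormedSpace ℝ L] [CompleteSpace L]
    (e : L →L[ℝ] K) (he : DenseRange e)
    (n : ℕ) (F : K → EuclideanSpace ℝ (Fin n))
    (F' : K → K →L[ℝ] EuclideanSpace ℝ (Fin n))
    (ξ : K) (U : Set K) (hU : IsOpen U) (hξU : ξ ∈ U)
    (hF : ∀ x ∈ U, HasFDerivAt F (F' x) x)
    (hF'cont : ContinuousOn F' U)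
    (hF'bdd : ∃ C, ∀ x ∈ U, ‖F' x‖ ≤ C)
    (hsurj : Function.Surjective (F' ξ)) :
    ∃ ξj : ℕ → L,
      Tendsto (fun j => ‖e (ξj j) - ξ‖) atTop (nhds 0) ∧ ∀ j, F (e (ξj j)) = F ξ :=
  exists_seq_in_dense_subspace_with_same_value_general e he n F F' ξ U hU hξU hF hF'cont hsurj
end

section
/- In the setting of the skeleton ODE dφ_t = Σ_{i=1}^d V_i(φ_t) dh^i_t with Jacobian J and its inverse J^{-1}, define for a smooth vector field W : ℝⁿ → ℝⁿ the path Q^W_t(h) = J_t^{-1} W(φ_t). Then Q^W satisfies dQ^W_t(h) = Σ_{i=1}^d Q^{[V_i, W]}_t(h) ḣ^i_t dt, where [V_i, W] = (∇W)V_i − (∇V_i)W is the Lie bracket. -/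
open MeasureTheory Set

/-- Lemma 3.3(i) (lm.abc): with `φ`, `J`, `K = J⁻¹` solving the drift-free skeleton
system driven by `h` (derivative `h'`), and `W` a smooth vector field, the path
`Q^W_t(h) = J_t⁻¹ W(φ_t)` satisfies `dQ^W_t = Σᵢ Q^{[Vᵢ,W]}_t ḣᵢ_t dt`, where
`[V,W](y) = ∇W(y)V(y) − ∇V(y)W(y)`. -/
theorem deriv_of_Q_is_bracket
    (n d : ℕ) (T : ℝ) (hT : 0 < T)
    (V : Fin d → (Fin n → ℝ) → (Fin n → ℝ))
    (W : (Fin n → ℝ) → (Fin n → ℝ))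
    (hV : ∀ i, ContDiff ℝ (⊤ : ℕ∞) (V i)) (hW : ContDiff ℝ (⊤ : ℕ∞) W)
    (h' : ℝ → Fin d → ℝ)
    (φ : ℝ → Fin n → ℝ)
    (J K : ℝ → (Fin n → ℝ) →L[ℝ] (Fin n → ℝ))
    (hφ : ∀ᵐ t ∂(volume.restrict (Icc (0:ℝ) T)),
      HasDerivAt φ (∑ i, h' t i • V i (φ t)) t)
    (hJ : ∀ᵐ t ∂(volume.restrict (Icc (0:ℝ) T)),
      HasDerivAt J (∑ i, h' t i • (fderiv ℝ (V i) (φ t) * J t)) t)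
    (hK : ∀ᵐ t ∂(volume.restrict (Icc (0:ℝ) T)),
      HasDerivAt K (-∑ i, h' t i • (K t * fderiv ℝ (V i) (φ t))) t)
    (hKJ : ∀ t ∈ Icc (0:ℝ) T, K t * J t = 1 ∧ J t * K t = 1) :
    ∀ᵐ t ∂(volume.restrict (Icc (0:ℝ) T)),
      HasDerivAt (fun s => K s (W (φ s)))
        (∑ i, h' t i • K t (fderiv ℝ W (φ t) (V i (φ t)) - fderiv ℝ (V i) (φ t) (W (φ t))))
        t := by
  filter_upwards [hφ, hK] with t hφt hKt
  have hWd : HasFDerivAt W (fderiv ℝ W (φ t)) (φ t) :=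
    (hW.differentiable (by simp) (φ t)).hasFDerivAt
  have hWφ : HasDerivAt (fun s => W (φ s)) (fderiv ℝ W (φ t) (∑ i, h' t i • V i (φ t))) t :=
    hWd.comp_hasDerivAt t hφt
  have := hKt.clm_apply hWφ
  convert this using 1
  · rfl
  · rfl
  · rfl
  simp only [ContinuousLinearMap.neg_apply, ContinuousLinearMap.sum_apply,
    ContinuousLinearMap.smul_apply, ContinuousLinearMap.mul_apply, map_sum, _root_.map_smul,
    map_sub, smul_sub]
  rw [Finset.sum_sub_distrib]
  abel
end

section
/- Let f : [0,1] → ℝ be continuous. Then the L²([β,1])-distance between f and the function t ↦ (1−β)^{-1} f((t−β)/(1−β)) tends to 0 as β ↘ 0. -/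
/-!
Substituting `t = β + (1 - β) s` turns the integrand into the square of
`f (β + (1 - β) s) - (1 - β)⁻¹ f s` with `s ∈ [0,1]`. This error is jointly continuous in `(β, s)`
on the compact rectangle `[0, 1/2] × [0, 1]` and vanishes at `β = 0`, so it tends to `0`
uniformly in `s`; the integral over `[β, 1]` is then at most the square of its supremum.
-/

open MeasureTheory Set Filter Topology

theorem IsCompact.tendstoUniformlyOn_of_continuousOn_prod {α β γ : Type*} [UniformSpace α]
    [UniformSpace β] [UniformSpace γ] {U : Set α} {K : Set β} {x : α} {F : α → β → γ}
    (hU : IsCompact U) (hK : IsCompact K) (hF : ContinuousOn ↿F (U ×ˢ K)) (hx : x ∈ U) :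
    TendstoUniformlyOn F (F x) (𝓝[U] x) K :=
  ((hU.prod hK).uniformContinuousOn_of_continuous hF).tendstoUniformlyOn hx

theorem tendstoUniformlyOn_reparam_sub {f : ℝ → ℝ} (hf : ContinuousOn f (Icc 0 1)) :
    TendstoUniformlyOn (fun β s => f (β + (1 - β) * s) - (1 - β)⁻¹ * f s) 0
      (𝓝[≥] 0) (Icc 0 1) := by
  have hcont : ContinuousOn (fun p : ℝ × ℝ => f (p.1 + (1 - p.1) * p.2) - (1 - p.1)⁻¹ * f p.2)
      (Icc 0 (1 / 2) ×ˢ Icc 0 1) := by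
    refine (hf.comp (by fun_prop) ?_).sub
      (((continuousOn_const.sub continuousOn_fst).inv₀ ?_).mul (hf.comp continuousOn_snd ?_))
    · rintro ⟨β, s⟩ ⟨⟨hβ0, hβ1⟩, hs0, hs1⟩
      constructor <;> nlinarith
    · rintro ⟨β, s⟩ ⟨⟨_, hβ1⟩, _⟩
      simp only [Pi.sub_apply]
      linarith
    · exact fun p hp => hp.2
  simpa [Pi.zero_def] using isCompact_Icc.tendstoUniformlyOn_of_continuousOn_prod
    (F := fun β s => f (β + (1 - β) * s) - (1 - β)⁻¹ * f s) isCompact_Icc hcont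
    (left_mem_Icc.2 (by norm_num : (0 : ℝ) ≤ 1 / 2))

theorem sub_div_one_sub_mem_Icc {β t : ℝ} (hβ : β < 1) (ht : t ∈ Icc β 1) :
    (t - β) / (1 - β) ∈ Icc (0 : ℝ) 1 := by
  have h : 0 < 1 - β := sub_pos.2 hβ
  exact ⟨div_nonneg (sub_nonneg.2 ht.1) h.le, (div_le_one h).2 (by linarith [ht.2])⟩

theorem abs_setIntegral_sq_reparam_le {f : ℝ → ℝ} {β C : ℝ} (hβ : β < 1)
    (hC : ∀ s ∈ Icc (0 : ℝ) 1, |f (β + (1 - β) * s) - (1 - β)⁻¹ * f s| ≤ C) :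
    |∫ t in Icc β 1, (f t - (1 - β)⁻¹ * f ((t - β) / (1 - β))) ^ 2| ≤ C ^ 2 * (1 - β) := by
  have hpt : ∀ t ∈ Icc β 1, ‖(f t - (1 - β)⁻¹ * f ((t - β) / (1 - β))) ^ 2‖ ≤ C ^ 2 := by
    intro t ht
    have hsub : β + (1 - β) * ((t - β) / (1 - β)) = t := by
      rw [mul_div_cancel₀ _ (sub_pos.2 hβ).ne']
      ring
    have h := hC _ (sub_div_one_sub_mem_Icc hβ ht)
    rw [hsub] at h
    rw [Real.norm_eq_abs, abs_pow]
    exact pow_le_pow_left₀ (abs_nonneg _) h 2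
  simpa [Real.volume_real_Icc_of_le hβ.le] using
    norm_setIntegral_le_of_norm_le_const (μ := volume) measure_Icc_lt_top hpt

/-- For continuous `f : [0,1] → ℝ`, the `L²([β,1])` distance between `f` and
`t ↦ (1-β)⁻¹ f((t-β)/(1-β))` tends to `0` as `β ↘ 0`. -/
theorem l2_dist_reparam_tendsto_zero
    (f : ℝ → ℝ) (hf : ContinuousOn f (Icc (0:ℝ) 1)) :
    Tendsto (fun β => ∫ t in Icc β 1, (f t - (1 - β)⁻¹ * f ((t - β) / (1 - β))) ^ 2)
      (nhdsWithin 0 (Ioo (0:ℝ) 1)) (nhds 0) := by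
  rw [Metric.tendsto_nhds]
  intro ε hε
  have hunif := Metric.tendstoUniformlyOn_iff.1 (tendstoUniformlyOn_reparam_sub hf) √ε
    (Real.sqrt_pos.2 hε)
  filter_upwards [nhdsWithin_mono 0 (Ioo_subset_Ioi_self.trans Ioi_subset_Ici_self) hunif,
    self_mem_nhdsWithin] with β hclose hβ
  have hbound := abs_setIntegral_sq_reparam_le (f := f) hβ.2 fun s hs => by
    simpa only [Pi.zero_apply, dist_zero_left, Real.norm_eq_abs] using (hclose s hs).le
  rw [Real.dist_eq, sub_zero]
  calc _ ≤ √ε ^ 2 * (1 - β) := hbound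
    _ < ε := by rw [Real.sq_sqrt hε.le]; nlinarith [hβ.1]
end

section
/- Suppose a family of probability measures {μ_ε}_{ε>0} on a Polish space S satisfies a large deviation principle with good rate function J, and let D = {a ∈ S : J(a) < ∞}. Let Ŝ be a Polish space, f : S → Ŝ a measurable map, and U ⊆ S an open set with D ⊆ U such that f restricted to U is continuous. Then {μ_ε ∘ f^{-1}}_{ε>0} satisfies a large deviation principle on Ŝ with good rate function Ĵ(b) = inf{ J(a) : a ∈ f^{-1}({b}) }. -/
open Filter Set MeasureTheory
open scoped ENNReal

/-- `μ ε` satisfies an LDP with speed `ε²` and rate `J`: for every Borel set `A`,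
`−inf_{A°} J ≤ liminf_{ε↘0} ε² log μ_ε(A) ≤ limsup_{ε↘0} ε² log μ_ε(A) ≤ −inf_{Ā} J`. -/
def SatisfiesLDP {S : Type*} [TopologicalSpace S] [MeasurableSpace S]
    (μ : ℝ → Measure S) (J : S → ℝ≥0∞) : Prop :=
  ∀ A : Set S, MeasurableSet A →
    (-(⨅ a ∈ interior A, (J a : EReal)) ≤
        liminf (fun ε : ℝ => ((ε ^ 2 : ℝ) : EReal) * ENNReal.log (μ ε A))
          (nhdsWithin 0 (Ioi (0:ℝ)))) ∧
    (limsup (fun ε : ℝ => ((ε ^ 2 : ℝ) : EReal) * ENNReal.log (μ ε A))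
        (nhdsWithin 0 (Ioi (0:ℝ))) ≤
      -(⨅ a ∈ closure A, (J a : EReal)))

/-- `J` is a good rate function: lower semicontinuous with compact sublevel sets. -/
def IsGoodRate {S : Type*} [TopologicalSpace S] (J : S → ℝ≥0∞) : Prop :=
  LowerSemicontinuous J ∧ ∀ c : ℝ≥0∞, c ≠ ⊤ → IsCompact {a | J a ≤ c}

/-
The sublevel sets of `Ĵ` are the images `f '' {J ≤ c}`: a point `b` with `Ĵ b ≤ c < ⊤` has a
preimage realising the infimum, because on the compact set `{J ≤ c + 1} ⊆ U` the fibre of the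
continuous map `f` is closed and `J` attains its minimum there. Since `f` is continuous on these
compact sets, `Ĵ` is again a good rate function. For the LDP bounds, every `a` with `J a < ∞`
is a point of continuity of `f`, so it lies in `interior (f ⁻¹' A)` when `f a ∈ interior A`, and
`f a ∈ closure A` when `a ∈ closure (f ⁻¹' A)`; points with `J a = ∞` do not affect the infima.
-/

theorem EReal.coe_ennreal_iInf {ι : Sort*} (g : ι → ℝ≥0∞) :
    ((⨅ i, g i : ℝ≥0∞) : EReal) = ⨅ i, (g i : EReal) :=
  Monotone.map_iInf_of_continuousAt continuous_coe_ennreal_ereal.continuousAt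
    EReal.coe_ennreal_strictMono.monotone EReal.coe_ennreal_top

/-- The contracted rate function `Ĵ b = inf {J a : f a = b}`. -/
noncomputable def pushforwardRate {S T : Type*} (f : S → T) (J : S → ℝ≥0∞) (b : T) : ℝ≥0∞ :=
  ⨅ a ∈ f ⁻¹' {b}, J a

theorem pushforwardRate_apply_le {S T : Type*} (f : S → T) (J : S → ℝ≥0∞) (a : S) :
    pushforwardRate f J (f a) ≤ J a :=
  iInf₂_le (f := fun x (_ : x ∈ f ⁻¹' {f a}) => J x) a rfl

section

variable {S T : Type*} [TopologicalSpace S] [TopologicalSpace T]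

theorem SatisfiesLDP.map [MeasurableSpace S] [MeasurableSpace T] {μ : ℝ → Measure S}
    {J : S → ℝ≥0∞} (hLDP : SatisfiesLDP μ J) {f : S → T} (hf : Measurable f) {J' : T → ℝ≥0∞}
    (hinterior : ∀ A, ⨅ a ∈ interior (f ⁻¹' A), J a ≤ ⨅ b ∈ interior A, J' b)
    (hclosure : ∀ A, ⨅ b ∈ closure A, J' b ≤ ⨅ a ∈ closure (f ⁻¹' A), J a) :
    SatisfiesLDP (fun ε => (μ ε).map f) J' := by
  intro A hA
  obtain ⟨hlower, hupper⟩ := hLDP _ (hf hA)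
  simp only [← EReal.coe_ennreal_iInf] at hlower hupper ⊢
  simp only [Measure.map_apply hf hA]
  exact ⟨(EReal.neg_le_neg_iff.2 (EReal.coe_ennreal_le_coe_ennreal_iff.2 (hinterior A))).trans
      hlower,
    hupper.trans (EReal.neg_le_neg_iff.2 (EReal.coe_ennreal_le_coe_ennreal_iff.2 (hclosure A)))⟩

theorem IsGoodRate.exists_mem_le_of_iInf_le {J : S → ℝ≥0∞} (hJ : IsGoodRate J) {F : Set S}
    {c : ℝ≥0∞} (hc : c ≠ ⊤) (hF : IsClosed (F ∩ {a | J a ≤ c + 1}))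
    (hle : ⨅ a ∈ F, J a ≤ c) : ∃ a ∈ F, J a ≤ c := by
  have hc1 : c < c + 1 := ENNReal.lt_add_right hc one_ne_zero
  have hK : IsCompact (F ∩ {a | J a ≤ c + 1}) :=
    (hJ.2 _ (ENNReal.add_ne_top.2 ⟨hc, ENNReal.one_ne_top⟩)).of_isClosed_subset hF
      inter_subset_right
  obtain ⟨a₀, ha₀F, ha₀⟩ : ∃ a ∈ F, J a < c + 1 := by
    simpa only [iInf_lt_iff, exists_prop] using hle.trans_lt hc1
  obtain ⟨a, ⟨haF, ha⟩, hmin⟩ :=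
    (hJ.1.lowerSemicontinuousOn _).exists_isMinOn (s := F ∩ {a | J a ≤ c + 1}) ⟨a₀, ha₀F, ha₀.le⟩ hK
  refine ⟨a, haF, not_lt.1 fun hca => ?_⟩
  obtain ⟨x, hxF, hx⟩ : ∃ x ∈ F, J x < min (J a) (c + 1) := by
    simpa only [iInf_lt_iff, exists_prop] using hle.trans_lt (lt_min hca hc1)
  exact (lt_min_iff.1 hx).1.not_ge (hmin ⟨hxF, (lt_min_iff.1 hx).2.le⟩)

variable {J : S → ℝ≥0∞} {f : S → T} {U : Set S}

theorem exists_eq_le_of_pushforwardRate_le [T1Space T] (hJ : IsGoodRate J)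
    (hDU : {a | J a ≠ ⊤} ⊆ U) (hfc : ContinuousOn f U) {b : T} {c : ℝ≥0∞} (hc : c ≠ ⊤)
    (hb : pushforwardRate f J b ≤ c) : ∃ a, f a = b ∧ J a ≤ c := by
  have hsub : {a | J a ≤ c + 1} ⊆ U := fun a ha =>
    hDU (ne_top_of_le_ne_top (ENNReal.add_ne_top.2 ⟨hc, ENNReal.one_ne_top⟩) ha)
  have hF : IsClosed (f ⁻¹' {b} ∩ {a | J a ≤ c + 1}) := by
    rw [inter_comm]
    exact (hfc.mono hsub).preimage_isClosed_of_isClosed (hJ.1.isClosed_preimage _)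
      isClosed_singleton
  obtain ⟨a, rfl, ha⟩ := hJ.exists_mem_le_of_iInf_le hc hF hb
  exact ⟨a, rfl, ha⟩

theorem setOf_pushforwardRate_le [T1Space T] (hJ : IsGoodRate J) (hDU : {a | J a ≠ ⊤} ⊆ U)
    (hfc : ContinuousOn f U) {c : ℝ≥0∞} (hc : c ≠ ⊤) :
    {b | pushforwardRate f J b ≤ c} = f '' {a | J a ≤ c} := by
  ext b
  refine ⟨fun hb => ?_, ?_⟩
  · obtain ⟨a, rfl, ha⟩ := exists_eq_le_of_pushforwardRate_le hJ hDU hfc hc hb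
    exact ⟨a, ha, rfl⟩
  · rintro ⟨a, ha, rfl⟩
    exact (pushforwardRate_apply_le f J a).trans ha

theorem isGoodRate_pushforwardRate [T2Space T] (hJ : IsGoodRate J) (hDU : {a | J a ≠ ⊤} ⊆ U)
    (hfc : ContinuousOn f U) : IsGoodRate (pushforwardRate f J) := by
  have hcompact : ∀ c : ℝ≥0∞, c ≠ ⊤ → IsCompact {b | pushforwardRate f J b ≤ c} := by
    intro c hc
    rw [setOf_pushforwardRate_le hJ hDU hfc hc]
    exact (hJ.2 c hc).image_of_continuousOn
      (hfc.mono fun a ha => hDU (ne_top_of_le_ne_top hc ha))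
  refine ⟨lowerSemicontinuous_iff_isClosed_preimage.2 fun c => ?_, hcompact⟩
  rcases eq_or_ne c ⊤ with rfl | hc
  · simp only [Iic_top, preimage_univ, isClosed_univ]
  · exact (hcompact c hc).isClosed

theorem iInf_interior_preimage_le_pushforwardRate (hU : IsOpen U) (hDU : {a | J a ≠ ⊤} ⊆ U)
    (hfc : ContinuousOn f U) (A : Set T) :
    ⨅ a ∈ interior (f ⁻¹' A), J a ≤ ⨅ b ∈ interior A, pushforwardRate f J b := by
  refine le_iInf₂ fun b hb => le_iInf₂ fun a (hab : f a = b) => ?_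
  rcases eq_or_ne (J a) ⊤ with ha | ha
  · exact ha ▸ le_top
  refine iInf₂_le a ?_
  have hcont : ContinuousAt f a := hfc.continuousAt (hU.mem_nhds (hDU ha))
  exact interior_mono (preimage_mono interior_subset)
    (mem_interior_iff_mem_nhds.2 (hcont.preimage_mem_nhds (isOpen_interior.mem_nhds (hab ▸ hb))))

theorem iInf_closure_pushforwardRate_le (hU : IsOpen U) (hDU : {a | J a ≠ ⊤} ⊆ U)
    (hfc : ContinuousOn f U) (A : Set T) :
    ⨅ b ∈ closure A, pushforwardRate f J b ≤ ⨅ a ∈ closure (f ⁻¹' A), J a := by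
  refine le_iInf₂ fun a ha => ?_
  rcases eq_or_ne (J a) ⊤ with hJa | hJa
  · exact hJa ▸ le_top
  have hcont : ContinuousAt f a := hfc.continuousAt (hU.mem_nhds (hDU hJa))
  have hfa : f a ∈ closure A := closure_mono (image_preimage_subset f A)
    (hcont.continuousWithinAt.mem_closure_image ha)
  exact (iInf₂_le (f a) hfa).trans (pushforwardRate_apply_le f J a)

end

theorem modified_contraction_principle_general
    {S : Type*} [MetricSpace S] [MeasurableSpace S]
    {T : Type*} [MetricSpace T] [MeasurableSpace T]
    (μ : ℝ → Measure S)
    (J : S → ℝ≥0∞) (hJ : IsGoodRate J) (hLDP : SatisfiesLDP μ J)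
    (f : S → T) (hf : Measurable f)
    (U : Set S) (hU : IsOpen U) (hDU : {a | J a ≠ ⊤} ⊆ U)
    (hfc : ContinuousOn f U) :
    SatisfiesLDP (fun ε => (μ ε).map f) (fun b => ⨅ a ∈ f ⁻¹' {b}, J a) ∧
      IsGoodRate (fun b => ⨅ a ∈ f ⁻¹' {b}, J a) :=
  ⟨hLDP.map hf (iInf_interior_preimage_le_pushforwardRate hU hDU hfc)
      (iInf_closure_pushforwardRate_le hU hDU hfc),
    isGoodRate_pushforwardRate hJ hDU hfc⟩

/-- Lemma 7.1 (lm.cntr), modified contraction principle: if `{μ_ε}` are Borel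
probability measures on a Polish space `S` satisfying an LDP with good rate `J`,
`f : S → Ŝ` is measurable, and `f` is continuous on an open `U` containing the
effective domain `D = {J < ∞}`, then `{μ_ε ∘ f⁻¹}` satisfies an LDP on the Polish
space `Ŝ` with good rate `Ĵ(b) = inf {J(a) : f(a) = b}`. -/
theorem modified_contraction_principle
    {S : Type*} [MetricSpace S] [CompleteSpace S] [SecondCountableTopology S]
    [MeasurableSpace S] [BorelSpace S]
    {T : Type*} [MetricSpace T] [CompleteSpace T] [SecondCountableTopology T]
    [MeasurableSpace T] [BorelSpace T]
    (μ : ℝ → Measure S) (hprob : ∀ ε : ℝ, 0 < ε → IsProbabilityMeasure (μ ε))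
    (J : S → ℝ≥0∞) (hJ : IsGoodRate J) (hLDP : SatisfiesLDP μ J)
    (f : S → T) (hf : Measurable f)
    (U : Set S) (hU : IsOpen U) (hDU : {a | J a ≠ ⊤} ⊆ U)
    (hfc : ContinuousOn f U) :
    SatisfiesLDP (fun ε => (μ ε).map f) (fun b => ⨅ a ∈ f ⁻¹' {b}, J a) ∧
      IsGoodRate (fun b => ⨅ a ∈ f ⁻¹' {b}, J a) :=
  modified_contraction_principle_general μ J hJ hLDP f hf U hU hDU hfc
end
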